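/- arXiv:2509.24290 — 5 statements merged into one kernel-verified Lean document; each statement's English description precedes it below -/
import Mathlib

section
/- Let n ≥ 1 and let M_1, …, M_{n+1} ≥ 1 be integers. Let f : [0,M_1) × ⋯ × [0,M_n) → [0,M_{n+1}) be increasing. For each integer vector z = (z_1, …, z_{n+1}) with 1 ≤ z_j ≤ M_j for all j, let I_z = [z_1−1, z_1) × ⋯ × [z_{n+1}−1, z_{n+1}). Then the number of vectors z for which f crosses I_z is at most (∏_{j=1}^{n+1} M_j) − (∏_{j=1}^{n+1} (M_j − 1)). -/
/-!
Reflect the last coordinate of the cell indices, `t ↦ M_{n+1} + 1 - t`. If the reflected index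
of `I_{z'}` exceeded that of `I_z` in every coordinate, then `I_{z'}` would lie to the upper
right of `I_z` in `x` and strictly below it in `t`; as `f` is increasing, a point of `I_z` under
the graph of `f` would force all of `I_{z'}` under it, so `f` cannot cross both. Hence the
reflected crossed cells form an antichain for the strict componentwise order. Sliding each index
down the diagonal `(1, …, 1)` until some coordinate hits `1` is injective on such an antichain
and lands in the lower boundary of the grid, which has `∏ M_j - ∏ (M_j - 1)` points.
-/

open MeasureTheory

/-- `f` crosses `S ⊆ ℝ^{n+1}` if both the part of `S` strictly below the graph of `f`
and the part strictly above it have positive Lebesgue measure. -/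
def Crosses (n : ℕ) (f : (Fin n → ℝ) → ℝ) (S : Set (Fin (n + 1) → ℝ)) : Prop :=
  0 < volume (S ∩ {p | f (fun j => p j.castSucc) < p (Fin.last n)}) ∧
  0 < volume (S ∩ {p | p (Fin.last n) < f (fun j => p j.castSucc)})

section Grid

variable {ι : Type*} [Fintype ι]

section Slide

variable [Nonempty ι]

def minCoord (z : ι → ℕ) : ℕ :=
  Finset.univ.inf' Finset.univ_nonempty z

lemma minCoord_le (z : ι → ℕ) (j : ι) : minCoord z ≤ z j :=
  Finset.inf'_le _ (Finset.mem_univ j)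

lemma exists_eq_minCoord (z : ι → ℕ) : ∃ j, z j = minCoord z := by
  obtain ⟨j, -, hj⟩ := Finset.exists_mem_eq_inf' Finset.univ_nonempty z
  exact ⟨j, hj.symm⟩

def diagonalSlide (z : ι → ℕ) : ι → ℕ :=
  fun j => z j + 1 - minCoord z

lemma diagonalSlide_injOn {S : Set (ι → ℕ)} (hS : IsAntichain StrongLT S) :
    Set.InjOn diagonalSlide S := by
  suffices key : ∀ z ∈ S, ∀ z' ∈ S,
      minCoord z ≤ minCoord z' → diagonalSlide z = diagonalSlide z' → z = z' by
    intro z hz z' hz' h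
    rcases le_total (minCoord z) (minCoord z') with hle | hle
    · exact key z hz z' hz' hle h
    · exact (key z' hz' z hz hle h.symm).symm
  intro z hz z' hz' hle h
  have hcoord : ∀ j, z j + minCoord z' = z' j + minCoord z := fun j => by
    have hj := congrFun h j
    simp only [diagonalSlide] at hj
    have := minCoord_le z j; have := minCoord_le z' j
    omega
  rcases hle.lt_or_eq with hlt | heq
  · by_contra hne
    refine hS hz hz' hne fun j => ?_
    -- `omega` does not read the `<` of `StrongLT`, which comes through the Pi instance
    have hj : z j < z' j := by have := hcoord j; omega
    exact hj
  · funext j; have := hcoord j; omega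

end Slide

variable [DecidableEq ι]

def grid (M : ι → ℕ) : Finset (ι → ℕ) :=
  Fintype.piFinset fun j => Finset.Icc 1 (M j)

lemma card_grid_sdiff_inner (M : ι → ℕ) :
    (grid M \ Fintype.piFinset fun j => Finset.Icc 2 (M j)).card =
      ∏ j, M j - ∏ j, (M j - 1) := by
  have hsub : (Fintype.piFinset fun j => Finset.Icc 2 (M j)) ⊆ grid M :=
    Fintype.piFinset_subset _ _ fun j => Finset.Icc_subset_Icc_left one_le_two
  rw [Finset.card_sdiff_of_subset hsub, grid, Fintype.card_piFinset, Fintype.card_piFinset]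
  simp only [Nat.card_Icc, Nat.add_sub_cancel]
  rfl

variable [Nonempty ι]

lemma diagonalSlide_mem_sdiff {M : ι → ℕ} {z : ι → ℕ} (hz : z ∈ grid M) :
    diagonalSlide z ∈ grid M \ Fintype.piFinset fun j => Finset.Icc 2 (M j) := by
  simp only [grid, Fintype.mem_piFinset, Finset.mem_Icc] at hz
  obtain ⟨j₀, hj₀⟩ := exists_eq_minCoord z
  simp only [grid, Finset.mem_sdiff, Fintype.mem_piFinset, Finset.mem_Icc, diagonalSlide,
    not_forall]
  refine ⟨fun j => ⟨?_, ?_⟩, j₀, ?_⟩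
  · have := minCoord_le z j; omega
  · have := minCoord_le z j; have := hz j; have := hz j₀; omega
  · omega

theorem ncard_le_of_isAntichain_strongLT {M : ι → ℕ} {S : Set (ι → ℕ)}
    (hgrid : S ⊆ grid M) (hS : IsAntichain StrongLT S) :
    S.ncard ≤ ∏ j, M j - ∏ j, (M j - 1) := by
  rw [← card_grid_sdiff_inner, ← Set.ncard_coe_finset]
  exact Set.ncard_le_ncard_of_injOn diagonalSlide
    (fun z hz => diagonalSlide_mem_sdiff (hgrid hz)) (diagonalSlide_injOn hS)
    (Finset.finite_toSet _)

end Grid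

section Cells

variable {n : ℕ}

def cell (z : Fin (n + 1) → ℕ) : Set (Fin (n + 1) → ℝ) :=
  Set.univ.pi fun j => Set.Ico ((z j : ℝ) - 1) (z j)

def reflectLast (M z : Fin (n + 1) → ℕ) : Fin (n + 1) → ℕ :=
  Function.update z (Fin.last n) (M (Fin.last n) + 1 - z (Fin.last n))

lemma reflectLast_mem_grid {M z : Fin (n + 1) → ℕ} (hz : z ∈ grid M) :
    reflectLast M z ∈ grid M := by
  simp only [grid, Fintype.mem_piFinset, Finset.mem_Icc] at hz ⊢
  intro j
  rcases eq_or_ne j (Fin.last n) with rfl | hj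
  · have := hz (Fin.last n)
    simp only [reflectLast, Function.update_self]; omega
  · simpa only [reflectLast, Function.update_of_ne hj] using hz j

lemma reflectLast_injOn (M : Fin (n + 1) → ℕ) :
    Set.InjOn (reflectLast M) (grid M : Set (Fin (n + 1) → ℕ)) := by
  intro z hz z' hz' h
  simp only [Finset.mem_coe, grid, Fintype.mem_piFinset, Finset.mem_Icc] at hz hz'
  funext j
  have hj := congrFun h j
  rcases eq_or_ne j (Fin.last n) with rfl | hne
  · simp only [reflectLast, Function.update_self] at hj
    have := hz (Fin.last n); have := hz' (Fin.last n); omega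
  · simpa only [reflectLast, Function.update_of_ne hne] using hj

lemma Crosses.exists_apply_lt_last {f : (Fin n → ℝ) → ℝ} {S : Set (Fin (n + 1) → ℝ)}
    (h : Crosses n f S) : ∃ p ∈ S, f (fun j => p j.castSucc) < p (Fin.last n) :=
  nonempty_of_measure_ne_zero h.1.ne'

lemma Crosses.exists_last_lt_apply {f : (Fin n → ℝ) → ℝ} {S : Set (Fin (n + 1) → ℝ)}
    (h : Crosses n f S) : ∃ p ∈ S, p (Fin.last n) < f (fun j => p j.castSucc) :=
  nonempty_of_measure_ne_zero h.2.ne'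

lemma not_crosses_of_lt_of_lt {M : Fin (n + 1) → ℕ} {f : (Fin n → ℝ) → ℝ}
    (hmono : ∀ x y : Fin n → ℝ, (∀ j, 0 ≤ x j) → (∀ j, x j ≤ y j) →
      (∀ j, y j < (M j.castSucc : ℝ)) → f x ≤ f y)
    {z z' : Fin (n + 1) → ℕ} (hz : z ∈ grid M) (hz' : z' ∈ grid M)
    (hx : ∀ j : Fin n, z j.castSucc < z' j.castSucc) (ht : z' (Fin.last n) < z (Fin.last n))
    (hcross : Crosses n f (cell z)) (hcross' : Crosses n f (cell z')) : False := by
  obtain ⟨p, hp, hpf⟩ := hcross.exists_last_lt_apply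
  obtain ⟨q, hq, hqf⟩ := hcross'.exists_apply_lt_last
  simp only [cell, Set.mem_pi, Set.mem_univ, Set.mem_Ico, forall_true_left] at hp hq
  simp only [grid, Fintype.mem_piFinset, Finset.mem_Icc] at hz hz'
  have hfpq : f (fun j => p j.castSucc) ≤ f (fun j => q j.castSucc) := by
    refine hmono _ _ (fun j => ?_) (fun j => ?_) (fun j => ?_)
    · have : (1 : ℝ) ≤ z j.castSucc := by exact_mod_cast (hz j.castSucc).1
      linarith [(hp j.castSucc).1]
    · have : (z j.castSucc : ℝ) + 1 ≤ z' j.castSucc := by exact_mod_cast hx j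
      linarith [(hp j.castSucc).2, (hq j.castSucc).1]
    · have : (z' j.castSucc : ℝ) ≤ M j.castSucc := by exact_mod_cast (hz' j.castSucc).2
      linarith [(hq j.castSucc).2]
  have : (z' (Fin.last n) : ℝ) + 1 ≤ z (Fin.last n) := by exact_mod_cast ht
  linarith [(hp (Fin.last n)).1, (hq (Fin.last n)).2]

def crossedCells (M : Fin (n + 1) → ℕ) (f : (Fin n → ℝ) → ℝ) : Set (Fin (n + 1) → ℕ) :=
  {z | (∀ j, 1 ≤ z j ∧ z j ≤ M j) ∧ Crosses n f (cell z)}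

lemma crossedCells_subset_grid (M : Fin (n + 1) → ℕ) (f : (Fin n → ℝ) → ℝ) :
    crossedCells M f ⊆ grid M := fun z hz => by
  simpa only [grid, Finset.mem_coe, Fintype.mem_piFinset, Finset.mem_Icc] using hz.1

lemma isAntichain_image_reflectLast_crossedCells {M : Fin (n + 1) → ℕ} {f : (Fin n → ℝ) → ℝ}
    (hmono : ∀ x y : Fin n → ℝ, (∀ j, 0 ≤ x j) → (∀ j, x j ≤ y j) →
      (∀ j, y j < (M j.castSucc : ℝ)) → f x ≤ f y) :
    IsAntichain StrongLT (reflectLast M '' crossedCells M f) := by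
  rintro _ ⟨z, hz, rfl⟩ _ ⟨z', hz', rfl⟩ - hlt
  have hgrid := crossedCells_subset_grid M f
  refine not_crosses_of_lt_of_lt hmono (hgrid hz) (hgrid hz') (fun j => ?_) ?_ hz.2 hz'.2
  · simpa only [reflectLast, Function.update_of_ne (Fin.castSucc_lt_last j).ne]
      using hlt j.castSucc
  · have hlast := hlt (Fin.last n)
    simp only [reflectLast, Function.update_self] at hlast
    have := (hz.1 (Fin.last n)).2
    omega

end Cells

theorem stmt_0_general (n : ℕ) (M : Fin (n + 1) → ℕ)
    (f : (Fin n → ℝ) → ℝ)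
    (hmono : ∀ x y : Fin n → ℝ, (∀ j, 0 ≤ x j) → (∀ j, x j ≤ y j) →
      (∀ j, y j < (M j.castSucc : ℝ)) → f x ≤ f y) :
    Set.ncard {z : Fin (n + 1) → ℕ |
        (∀ j, 1 ≤ z j ∧ z j ≤ M j) ∧
        Crosses n f (Set.univ.pi fun j => Set.Ico ((z j : ℝ) - 1) (z j))} ≤
      (∏ j, M j) - ∏ j, (M j - 1) := by
  have hgrid := crossedCells_subset_grid M f
  show (crossedCells M f).ncard ≤ _
  rw [← ((reflectLast_injOn M).mono hgrid).ncard_image]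
  exact ncard_le_of_isAntichain_strongLT
    (Set.image_subset_iff.mpr fun z hz => reflectLast_mem_grid (hgrid hz))
    (isAntichain_image_reflectLast_crossedCells hmono)

theorem stmt_0 (n : ℕ) (hn : 1 ≤ n) (M : Fin (n + 1) → ℕ) (hM : ∀ j, 1 ≤ M j)
    (f : (Fin n → ℝ) → ℝ)
    (hmono : ∀ x y : Fin n → ℝ, (∀ j, 0 ≤ x j) → (∀ j, x j ≤ y j) →
      (∀ j, y j < (M j.castSucc : ℝ)) → f x ≤ f y)
    (hmem : ∀ x : Fin n → ℝ, (∀ j, 0 ≤ x j ∧ x j < (M j.castSucc : ℝ)) →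
      0 ≤ f x ∧ f x < (M (Fin.last n) : ℝ)) :
    Set.ncard {z : Fin (n + 1) → ℕ |
        (∀ j, 1 ≤ z j ∧ z j ≤ M j) ∧
        Crosses n f (Set.univ.pi fun j => Set.Ico ((z j : ℝ) - 1) (z j))} ≤
      (∏ j, M j) - ∏ j, (M j - 1) :=
  stmt_0_general n M f hmono
end

section
/- Let n ≥ 1 and let M_1, …, M_{n+1} ≥ 1 be integers. Let f : [0,M_1) × ⋯ × [0,M_n) → [0,M_{n+1}) be increasing. Let z = (z_1, …, z_{n+1}) and z' = (z'_1, …, z'_{n+1}) be integer vectors with 1 ≤ z_j ≤ M_j and 1 ≤ z'_j ≤ M_j for all j, such that for some integer m ≥ 1 one has z'_i = z_i − m for all 1 ≤ i ≤ n and z'_{n+1} = z_{n+1} + m. If f crosses the unit box I_z = [z_1−1, z_1) × ⋯ × [z_{n+1}−1, z_{n+1}), then f does not cross I_{z'} = [z'_1−1, z'_1) × ⋯ × [z'_{n+1}−1, z'_{n+1}). -/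
/-!
Pick a point `p` of `I_z` strictly above the graph and a point `q` of `I_{z'}` strictly below it.
The shift by `m` puts `q` weakly below `p` in the first `n` coordinates and strictly above `p`
in the last one, so monotonicity gives
`f (init q) ≤ f (init p) < p_{n+1} < q_{n+1} < f (init q)`.
-/

open MeasureTheory

open Set

theorem Crosses.exists_mem_graph_lt {n : ℕ} {f : (Fin n → ℝ) → ℝ} {S : Set (Fin (n + 1) → ℝ)}
    (h : Crosses n f S) : ∃ p ∈ S, f (Fin.init p) < p (Fin.last n) :=
  nonempty_of_measure_ne_zero h.1.ne'

theorem Crosses.exists_mem_lt_graph {n : ℕ} {f : (Fin n → ℝ) → ℝ} {S : Set (Fin (n + 1) → ℝ)}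
    (h : Crosses n f S) : ∃ p ∈ S, p (Fin.last n) < f (Fin.init p) :=
  nonempty_of_measure_ne_zero h.2.ne'

theorem not_crosses_of_crosses_of_monotoneOn {n : ℕ} {f : (Fin n → ℝ) → ℝ} {D : Set (Fin n → ℝ)}
    (hf : MonotoneOn f D) {S T : Set (Fin (n + 1) → ℝ)}
    (hSD : ∀ p ∈ S, Fin.init p ∈ D) (hTD : ∀ q ∈ T, Fin.init q ∈ D)
    (hinit : ∀ p ∈ S, ∀ q ∈ T, Fin.init q ≤ Fin.init p)
    (hlast : ∀ p ∈ S, ∀ q ∈ T, p (Fin.last n) ≤ q (Fin.last n))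
    (hS : Crosses n f S) : ¬ Crosses n f T := by
  intro hT
  obtain ⟨p, hpS, hp⟩ := hS.exists_mem_graph_lt
  obtain ⟨q, hqT, hq⟩ := hT.exists_mem_lt_graph
  have hfqp : f (Fin.init q) ≤ f (Fin.init p) :=
    hf (hTD q hqT) (hSD p hpS) (hinit p hpS q hqT)
  linarith [hlast p hpS q hqT]

section UnitBox

variable {ι : Type*}

def unitBox (z : ι → ℕ) : Set (ι → ℝ) :=
  univ.pi fun j => Ico ((z j : ℝ) - 1) (z j)

theorem lt_of_mem_unitBox {z z' : ι → ℕ} {p q : ι → ℝ} (hp : p ∈ unitBox z) (hq : q ∈ unitBox z')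
    {j : ι} (hj : z' j < z j) : q j < p j := by
  have hj' : (z' j : ℝ) + 1 ≤ z j := by exact_mod_cast hj
  linarith [(hp j trivial).1, (hq j trivial).2]

theorem unitBox_subset_pi_Ico {z M : ι → ℕ} (hz : ∀ j, 1 ≤ z j ∧ z j ≤ M j) :
    unitBox z ⊆ univ.pi fun j => Ico (0 : ℝ) (M j) := by
  intro p hp j _
  have h1 : (1 : ℝ) ≤ z j := by exact_mod_cast (hz j).1
  have h2 : (z j : ℝ) ≤ M j := by exact_mod_cast (hz j).2
  exact ⟨by linarith [(hp j trivial).1], by linarith [(hp j trivial).2]⟩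

end UnitBox

theorem Fin.init_mem_pi {α : Type*} {n : ℕ} {s : Fin (n + 1) → Set α} {p : Fin (n + 1) → α}
    (hp : p ∈ univ.pi s) : Fin.init p ∈ univ.pi fun j => s j.castSucc :=
  fun j _ => hp j.castSucc trivial

theorem stmt_1_general (n : ℕ) (M : Fin (n + 1) → ℕ)
    (f : (Fin n → ℝ) → ℝ)
    (hmono : ∀ x y : Fin n → ℝ, (∀ j, 0 ≤ x j) → (∀ j, x j ≤ y j) →
      (∀ j, y j < (M j.castSucc : ℝ)) → f x ≤ f y)
    (z z' : Fin (n + 1) → ℕ)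
    (hz : ∀ j, 1 ≤ z j ∧ z j ≤ M j) (hz' : ∀ j, 1 ≤ z' j ∧ z' j ≤ M j)
    (m : ℕ) (hm : 1 ≤ m)
    (hfirst : ∀ i : Fin n, z i.castSucc = z' i.castSucc + m)
    (hlast : z' (Fin.last n) = z (Fin.last n) + m)
    (hcross : Crosses n f (Set.univ.pi fun j => Set.Ico ((z j : ℝ) - 1) (z j))) :
    ¬ Crosses n f (Set.univ.pi fun j => Set.Ico ((z' j : ℝ) - 1) (z' j)) := by
  have hf : MonotoneOn f (univ.pi fun j => Ico (0 : ℝ) (M j.castSucc)) :=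
    fun x hx y hy hxy => hmono x y (fun j => (hx j trivial).1) hxy (fun j => (hy j trivial).2)
  refine not_crosses_of_crosses_of_monotoneOn hf
    (fun p hp => Fin.init_mem_pi (unitBox_subset_pi_Ico hz hp))
    (fun q hq => Fin.init_mem_pi (unitBox_subset_pi_Ico hz' hq))
    (fun p hp q hq i => (lt_of_mem_unitBox (z := z) hp hq ?_).le)
    (fun p hp q hq => (lt_of_mem_unitBox (z := z') hq hp ?_).le) hcross
  · have := hfirst i
    omega
  · omega

theorem stmt_1 (n : ℕ) (hn : 1 ≤ n) (M : Fin (n + 1) → ℕ) (hM : ∀ j, 1 ≤ M j)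
    (f : (Fin n → ℝ) → ℝ)
    (hmono : ∀ x y : Fin n → ℝ, (∀ j, 0 ≤ x j) → (∀ j, x j ≤ y j) →
      (∀ j, y j < (M j.castSucc : ℝ)) → f x ≤ f y)
    (hmem : ∀ x : Fin n → ℝ, (∀ j, 0 ≤ x j ∧ x j < (M j.castSucc : ℝ)) →
      0 ≤ f x ∧ f x < (M (Fin.last n) : ℝ))
    (z z' : Fin (n + 1) → ℕ)
    (hz : ∀ j, 1 ≤ z j ∧ z j ≤ M j) (hz' : ∀ j, 1 ≤ z' j ∧ z' j ≤ M j)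
    (m : ℕ) (hm : 1 ≤ m)
    (hfirst : ∀ i : Fin n, z i.castSucc = z' i.castSucc + m)
    (hlast : z' (Fin.last n) = z (Fin.last n) + m)
    (hcross : Crosses n f (Set.univ.pi fun j => Set.Ico ((z j : ℝ) - 1) (z j))) :
    ¬ Crosses n f (Set.univ.pi fun j => Set.Ico ((z' j : ℝ) - 1) (z' j)) :=
  stmt_1_general n M f hmono z z' hz hz' m hm hfirst hlast hcross
end

section
/- Let n ≥ 1, let f : [0,1]^n → [0,1) be increasing, let k ≥ 0 and 0 ≤ i ≤ n be integers. Consider the partition of [0,1)^{n+1} into dyadic boxes whose sides have length 2^{−(k+1)} in the first i coordinates and length 2^{−k} in the remaining n+1−i coordinates (there are 2^{k(n+1)+i} such boxes). Then the number of these boxes that f crosses is at most 2^{k(n+1)+i} − (2^{k+1}−1)^i (2^k−1)^{n+1−i}. -/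
/-!
Along a diagonal of the grid (add `c` to every `x`-index, subtract `c` from the `t`-index)
an increasing `f` crosses at most one box: if `p` lies below the graph in a crossed box, every
point `q` of a strictly later box has `q_t < p_t < f(p_x) ≤ f(q_x)`. Reflecting the `t`-index
turns these lines into the diagonals `a + c • 1`, and sending each grid point to
`a - (min a) • 1`, the first point of its diagonal, injects the crossed boxes into the grid
points with a zero coordinate, whose number is `∏ N j - ∏ (N j - 1)`.
-/

open MeasureTheory

/-- The dyadic box indexed by `m`, whose `j`-th side is `[m j / 2 ^ e j, (m j + 1) / 2 ^ e j)`. -/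
def dyadicBox (n : ℕ) (e m : Fin (n + 1) → ℕ) : Set (Fin (n + 1) → ℝ) :=
  Set.univ.pi fun j => Set.Ico ((m j : ℝ) / 2 ^ e j) ((m j + 1 : ℝ) / 2 ^ e j)

section DiagonalCounting

variable {ι : Type*} [Fintype ι]

theorem ncard_le_prod_sub_prod_of_diagonal_free [Nonempty ι] (N : ι → ℕ) (S : Set (ι → ℕ))
    (hS : ∀ a ∈ S, ∀ j, a j < N j) (hdiag : ∀ a ∈ S, ∀ c, 0 < c → (fun j => a j + c) ∉ S) :
    S.ncard ≤ ∏ j, N j - ∏ j, (N j - 1) := by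
  classical
  set start : (ι → ℕ) → ι → ℕ := fun a j => a j - ⨅ i, a i
  have hmin_le (a : ι → ℕ) (j : ι) : ⨅ i, a i ≤ a j := ciInf_le (OrderBot.bddBelow _) j
  have heq_of_le : ∀ a ∈ S, ∀ b ∈ S, start a = start b → ⨅ i, a i ≤ ⨅ i, b i → a = b := by
    intro a ha b hb hab hle
    have hb_eq : b = fun j => a j + ((⨅ i, b i) - ⨅ i, a i) := by
      funext j
      have := congrFun hab j
      dsimp only [start] at this
      have := hmin_le a j
      have := hmin_le b j
      omega
    obtain hlt | heq := hle.lt_or_eq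
    · exact absurd hb (hb_eq ▸ hdiag a ha _ (Nat.sub_pos_of_lt hlt))
    · simpa [← heq] using hb_eq.symm
  have hinj : S.InjOn start := fun a ha b hb hab =>
    (le_total (⨅ i, a i) (⨅ i, b i)).elim (heq_of_le a ha b hb hab)
      fun hle => (heq_of_le b hb a ha hab.symm hle).symm
  set grid := Fintype.piFinset fun j => Finset.range (N j)
  set interior := Fintype.piFinset fun j => Finset.Ico 1 (N j)
  have hmaps : ∀ a ∈ S, start a ∈ (↑(grid \ interior) : Set (ι → ℕ)) := by
    intro a ha
    obtain ⟨j₀, hj₀⟩ := exists_eq_ciInf_of_finite (f := a)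
    simp only [Finset.coe_sdiff, Set.mem_sdiff, Finset.mem_coe, grid, interior,
      Fintype.mem_piFinset, Finset.mem_range, Finset.mem_Ico, not_forall]
    exact ⟨fun j => (Nat.sub_le _ _).trans_lt (hS a ha j), j₀, by simp [start, hj₀]⟩
  have hsub : interior ⊆ grid := Fintype.piFinset_subset _ _ fun j =>
    Finset.range_eq_Ico (N j) ▸ Finset.Ico_subset_Ico_left zero_le_one
  calc S.ncard ≤ (↑(grid \ interior) : Set (ι → ℕ)).ncard :=
        Set.ncard_le_ncard_of_injOn start hmaps hinj
    _ = ∏ j, N j - ∏ j, (N j - 1) := by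
      rw [Set.ncard_coe_finset, Finset.card_sdiff_of_subset hsub, Fintype.card_piFinset,
        Fintype.card_piFinset]
      simp

theorem ncard_le_prod_sub_prod_of_antidiagonal_free [DecidableEq ι] (t : ι) (N : ι → ℕ)
    (S : Set (ι → ℕ)) (hS : ∀ a ∈ S, ∀ j, a j < N j)
    (hanti : ∀ a ∈ S, ∀ b ∈ S, ∀ c, 0 < c → (∀ j ≠ t, b j = a j + c) → b t + c ≠ a t) :
    S.ncard ≤ ∏ j, N j - ∏ j, (N j - 1) := by
  set reflect : (ι → ℕ) → ι → ℕ := fun a => Function.update a t (N t - 1 - a t)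
  have hreflect_lt : ∀ a ∈ S, ∀ j, reflect a j < N j := by
    intro a ha j
    have := hS a ha j
    rcases eq_or_ne j t with rfl | hj
    · simp only [reflect, Function.update_self]; omega
    · simpa [reflect, hj]
  have hinvol : ∀ a ∈ S, reflect (reflect a) = a := by
    intro a ha
    funext j
    have := hS a ha j
    rcases eq_or_ne j t with rfl | hj
    · simp only [reflect, Function.update_self]; omega
    · simp [reflect, hj]
  have hinj : S.InjOn reflect := fun a ha b hb hab => by
    rw [← hinvol a ha, hab, hinvol b hb]
  have : Nonempty ι := ⟨t⟩
  rw [← hinj.ncard_image]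
  refine ncard_le_prod_sub_prod_of_diagonal_free N _ ?_ ?_
  · rintro _ ⟨a, ha, rfl⟩
    exact hreflect_lt a ha
  · rintro _ ⟨a, ha, rfl⟩ c hc ⟨b, hb, hab⟩
    refine hanti a ha b hb c hc (fun j hj => ?_) ?_
    · simpa [reflect, hj] using congrFun hab j
    · have := congrFun hab t
      have := hS a ha t
      have := hS b hb t
      simp only [reflect, Function.update_self] at *
      omega

end DiagonalCounting

theorem prod_fin_ite_lt {M : Type*} [CommMonoid M] {m i : ℕ} (hi : i ≤ m) (a b : M) :
    ∏ j : Fin m, (if (j : ℕ) < i then a else b) = a ^ i * b ^ (m - i) := by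
  obtain ⟨r, rfl⟩ := Nat.exists_eq_add_of_le hi
  rw [Fin.prod_univ_eq_prod_range (fun j => if j < i then a else b), Finset.prod_range_add,
    Finset.prod_congr rfl fun j hj => if_pos (Finset.mem_range.1 hj),
    Finset.prod_congr rfl fun j _ => if_neg (Nat.not_lt.2 (Nat.le_add_right i j))]
  simp

section Boxes

variable {n : ℕ} {e m m' : Fin (n + 1) → ℕ} {p q : Fin (n + 1) → ℝ}

theorem nonneg_of_mem_dyadicBox (hp : p ∈ dyadicBox n e m) (j : Fin (n + 1)) : 0 ≤ p j :=
  (by positivity : (0 : ℝ) ≤ m j / 2 ^ e j).trans (hp j trivial).1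

theorem lt_one_of_mem_dyadicBox (hp : p ∈ dyadicBox n e m) {j : Fin (n + 1)}
    (hj : m j + 1 ≤ 2 ^ e j) : p j < 1 :=
  calc p j < (m j + 1 : ℝ) / 2 ^ e j := (hp j trivial).2
    _ ≤ 1 := (div_le_one (by positivity)).2 (by exact_mod_cast hj)

theorem lt_of_mem_dyadicBox (hp : p ∈ dyadicBox n e m) (hq : q ∈ dyadicBox n e m')
    {j : Fin (n + 1)} (hj : m j + 1 ≤ m' j) : p j < q j :=
  calc p j < (m j + 1 : ℝ) / 2 ^ e j := (hp j trivial).2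
    _ ≤ m' j / 2 ^ e j := by gcongr; exact_mod_cast hj
    _ ≤ q j := (hq j trivial).1

end Boxes

section Crossing

variable {n : ℕ} {f : (Fin n → ℝ) → ℝ} {S : Set (Fin (n + 1) → ℝ)}

theorem Crosses.exists_above (h : Crosses n f S) :
    ∃ p ∈ S, f (fun j => p j.castSucc) < p (Fin.last n) :=
  nonempty_of_measure_ne_zero h.1.ne'

theorem Crosses.exists_below (h : Crosses n f S) :
    ∃ p ∈ S, p (Fin.last n) < f (fun j => p j.castSucc) :=
  nonempty_of_measure_ne_zero h.2.ne'

theorem not_crosses_of_crosses_of_lt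
    (hmono : ∀ x y : Fin n → ℝ, (∀ j, 0 ≤ x j) → (∀ j, x j ≤ y j) →
      (∀ j, y j ≤ 1) → f x ≤ f y)
    {e m m' : Fin (n + 1) → ℕ} (hm : Crosses n f (dyadicBox n e m))
    (hx : ∀ j : Fin n, m j.castSucc + 1 ≤ m' j.castSucc)
    (ht : m' (Fin.last n) + 1 ≤ m (Fin.last n))
    (hm' : ∀ j : Fin n, m' j.castSucc + 1 ≤ 2 ^ e j.castSucc) :
    ¬ Crosses n f (dyadicBox n e m') := fun hm'_crosses => by
  obtain ⟨p, hp, hpf⟩ := hm.exists_below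
  obtain ⟨q, hq, hqf⟩ := hm'_crosses.exists_above
  have hfpq : f (fun j => p j.castSucc) ≤ f (fun j => q j.castSucc) :=
    hmono _ _ (fun j => nonneg_of_mem_dyadicBox hp _)
      (fun j => (lt_of_mem_dyadicBox hp hq (hx j)).le)
      (fun j => (lt_one_of_mem_dyadicBox hq (hm' j)).le)
  have := lt_of_mem_dyadicBox hq hp ht
  linarith

end Crossing

theorem stmt_3_general (n : ℕ) (f : (Fin n → ℝ) → ℝ)
    (hmono : ∀ x y : Fin n → ℝ, (∀ j, 0 ≤ x j) → (∀ j, x j ≤ y j) →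
      (∀ j, y j ≤ 1) → f x ≤ f y)
    (k i : ℕ) (hi : i ≤ n) :
    Set.ncard {m : Fin (n + 1) → ℕ |
        (∀ j, m j < 2 ^ (if (j : ℕ) < i then k + 1 else k)) ∧
        Crosses n f (dyadicBox n (fun j => if (j : ℕ) < i then k + 1 else k) m)} ≤
      2 ^ (k * (n + 1) + i) - (2 ^ (k + 1) - 1) ^ i * (2 ^ k - 1) ^ (n + 1 - i) := by
  set e : Fin (n + 1) → ℕ := fun j => if (j : ℕ) < i then k + 1 else k
  refine (ncard_le_prod_sub_prod_of_antidiagonal_free (Fin.last n) (fun j => 2 ^ e j) _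
    (fun a ha => ha.1) ?_).trans_eq ?_
  · rintro a ⟨-, ha⟩ b ⟨hb_lt, hb⟩ c hc hx ht
    refine not_crosses_of_crosses_of_lt hmono ha (fun j => ?_) (by omega)
      (fun j => hb_lt j.castSucc) hb
    rw [hx _ (Fin.castSucc_ne_last j)]
    omega
  · have hcells : ∏ j, 2 ^ e j = 2 ^ (k * (n + 1) + i) := by
      simp only [e, pow_ite]
      rw [prod_fin_ite_lt (hi.trans n.le_succ), ← pow_mul, ← pow_mul, ← pow_add]
      congr 1
      zify [hi.trans n.le_succ]
      ring
    rw [hcells, Finset.prod_congr rfl fun j _ => apply_ite (fun x => 2 ^ x - 1) _ _ _,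
      prod_fin_ite_lt (hi.trans n.le_succ)]

theorem stmt_3 (n : ℕ) (hn : 1 ≤ n) (f : (Fin n → ℝ) → ℝ)
    (hmono : ∀ x y : Fin n → ℝ, (∀ j, 0 ≤ x j) → (∀ j, x j ≤ y j) →
      (∀ j, y j ≤ 1) → f x ≤ f y)
    (hmem : ∀ x : Fin n → ℝ, (∀ j, 0 ≤ x j ∧ x j ≤ 1) → 0 ≤ f x ∧ f x < 1)
    (k i : ℕ) (hi : i ≤ n) :
    Set.ncard {m : Fin (n + 1) → ℕ |
        (∀ j, m j < 2 ^ (if (j : ℕ) < i then k + 1 else k)) ∧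
        Crosses n f (dyadicBox n (fun j => if (j : ℕ) < i then k + 1 else k) m)} ≤
      2 ^ (k * (n + 1) + i) - (2 ^ (k + 1) - 1) ^ i * (2 ^ k - 1) ^ (n + 1 - i) :=
  stmt_3_general n f hmono k i hi
end

section
/- Let n ≥ 1, let f : [0,1]^n → [0,1) be increasing, let k ≥ 0 and 0 ≤ i ≤ n be integers. Consider the partition of [0,1)^{n+1} into dyadic boxes whose sides have length 2^{−(k+1)} in the first i coordinates and length 2^{−k} in the remaining n+1−i coordinates. Then the (n+1)-dimensional Lebesgue measure of the union of those boxes that f crosses is at most 1 − (2^{k+1}−1)^i (2^k−1)^{n+1−i} / 2^{k(n+1)+i}. -/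
/-!
Fix a column of the grid, i.e. the first `n` indices `b` of a box. By monotonicity of `f`, every
crossed box of the column lies between the rows containing the values of `f` at the lower corner
`b` and at the upper corner `b + 1`, so the column has at most `graphRow (b + 1) + 1 - graphRow b`
crossed boxes. Summed over the columns these differences telescope to the values of `graphRow` at
the corners `b + 1` lying on the upper faces of the cube; each is less than the number of rows,
and there are `∏ 2 ^ e j - ∏ (2 ^ e j - 1)` such corners (products over the first `n`
coordinates). Hence at least `∏ (2 ^ e j - 1)` boxes, the product now running over all `n + 1`
coordinates, are not crossed.
-/

open MeasureTheory

open Finset Function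
open scoped ENNReal

@[to_additive]
lemma Fin.prod_univ_ite_val_lt {M : Type*} [CommMonoid M] {n i : ℕ} (hi : i ≤ n) (a b : M) :
    ∏ j : Fin n, (if (j : ℕ) < i then a else b) = a ^ i * b ^ (n - i) := by
  rw [prod_ite, Finset.prod_const, Finset.prod_const, filter_not,
    card_sdiff_of_subset (filter_subset _ _), Fin.card_filter_val_lt, card_univ, Fintype.card_fin,
    min_eq_right hi]

lemma sum_le_sum_add_card_sdiff_mul {ι : Type*} [DecidableEq ι] {B : Finset ι} {σ : ι → ι}
    (hσ : Set.InjOn σ B) {A : ι → ℕ} {M : ℕ} (hM : ∀ c ∈ B.image σ \ B, A c ≤ M) :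
    ∑ b ∈ B, A (σ b) ≤ ∑ b ∈ B, A b + #(B.image σ \ B) * M := by
  rw [← sum_image hσ, ← sum_inter_add_sum_sdiff _ B, ← smul_eq_mul]
  exact add_le_add (sum_le_sum_of_subset inter_subset_right) (sum_le_card_nsmul _ _ _ hM)

lemma card_image_add_one_sdiff_piFinset_range_add_prod {ι : Type*} [Fintype ι] [DecidableEq ι]
    (N : ι → ℕ) :
    #((Fintype.piFinset fun j => range (N j)).image (· + 1) \
        Fintype.piFinset fun j => range (N j)) + ∏ j, (N j - 1) = ∏ j, N j := by
  set B := Fintype.piFinset fun j => range (N j)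
  have hinter : B.image (· + 1) ∩ B = Fintype.piFinset fun j => Ico 1 (N j) := by
    ext c
    simp only [B, mem_inter, mem_image, Fintype.mem_piFinset, mem_range, mem_Ico]
    constructor
    · rintro ⟨⟨b, -, rfl⟩, hc⟩
      exact fun j => ⟨by simp, hc j⟩
    · intro hc
      refine ⟨⟨c - 1, fun j => ?_, funext fun j => ?_⟩, fun j => (hc j).2⟩ <;>
        simp only [Pi.add_apply, Pi.sub_apply, Pi.one_apply] <;> grind
  have hcard : #(B.image (· + 1)) = ∏ j, N j := by
    rw [card_image_of_injective _ (add_left_injective 1), Fintype.card_piFinset]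
    simp
  rw [← hcard, ← card_inter_add_card_sdiff (B.image (· + 1)) B, hinter, Fintype.card_piFinset]
  simp [add_comm]

lemma floor_mul_eq_of_mem_Ico_div {m : ℕ} {d x : ℝ} (hd : 0 < d)
    (hx : x ∈ Set.Ico (m / d) ((m + 1) / d)) : ⌊x * d⌋₊ = m := by
  rw [Set.mem_Ico, div_le_iff₀ hd, lt_div_iff₀ hd] at hx
  exact (Nat.floor_eq_iff ((Nat.cast_nonneg m).trans hx.1)).2 hx

section DyadicBox

variable {n : ℕ} (e : Fin (n + 1) → ℕ)

lemma measurableSet_dyadicBox (m : Fin (n + 1) → ℕ) : MeasurableSet (dyadicBox n e m) :=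
  .univ_pi fun _ => measurableSet_Ico

lemma volume_dyadicBox (m : Fin (n + 1) → ℕ) :
    volume (dyadicBox n e m) = ENNReal.ofReal ((2 : ℝ) ^ ∑ j, e j)⁻¹ := by
  simp only [dyadicBox, volume_pi_pi, Real.volume_Ico, ← sub_div, add_sub_cancel_left, one_div]
  rw [← ENNReal.ofReal_prod_of_nonneg fun j _ => by positivity, prod_inv_distrib,
    prod_pow_eq_pow_sum]

lemma pairwise_disjoint_dyadicBox : Pairwise (Disjoint on (dyadicBox n e)) := by
  intro m m' hne
  refine Set.disjoint_left.2 fun p hp hp' => hne (funext fun j => ?_)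
  rw [← floor_mul_eq_of_mem_Ico_div (by positivity) (hp j trivial),
    floor_mul_eq_of_mem_Ico_div (by positivity) (hp' j trivial)]

lemma volume_biUnion_dyadicBox (T : Finset (Fin (n + 1) → ℕ)) :
    volume (⋃ m ∈ T, dyadicBox n e m) = #T * ENNReal.ofReal ((2 : ℝ) ^ ∑ j, e j)⁻¹ := by
  rw [measure_biUnion_finset ((pairwise_disjoint_dyadicBox e).set_pairwise _)
    fun m _ => measurableSet_dyadicBox e m]
  simp only [volume_dyadicBox, sum_const, nsmul_eq_mul]

end DyadicBox

noncomputable def gridVertex {n : ℕ} (d b : Fin n → ℕ) : Fin n → ℝ :=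
  fun j => b j / 2 ^ d j

lemma gridVertex_mem_Icc {n : ℕ} {d b : Fin n → ℕ} (hb : ∀ j, b j ≤ 2 ^ d j) :
    gridVertex d b ∈ Set.Icc 0 1 :=
  ⟨fun j => by simp only [gridVertex]; positivity, fun j => by
    simp only [gridVertex, Pi.one_apply]
    exact (div_le_one (by positivity)).2 (by exact_mod_cast hb j)⟩

lemma gridVertex_mono {n : ℕ} (d : Fin n → ℕ) : Monotone (gridVertex d) := fun b b' h j => by
  simp only [gridVertex]
  gcongr
  exact h j

lemma init_mem_Icc_gridVertex {n : ℕ} {e m : Fin (n + 1) → ℕ} {p : Fin (n + 1) → ℝ}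
    (hp : p ∈ dyadicBox n e m) :
    Fin.init p ∈ Set.Icc (gridVertex (Fin.init e) (Fin.init m))
      (gridVertex (Fin.init e) (Fin.init m + 1)) :=
  ⟨fun j => (hp j.castSucc trivial).1, fun j => by
    simp only [gridVertex, Fin.init, Pi.add_apply, Pi.one_apply]
    exact_mod_cast (hp j.castSucc trivial).2.le⟩

open Classical in
noncomputable def crossingBoxes (n : ℕ) (f : (Fin n → ℝ) → ℝ) (e : Fin (n + 1) → ℕ) :
    Finset (Fin (n + 1) → ℕ) :=
  {m ∈ Fintype.piFinset fun j => range (2 ^ e j) | Crosses n f (dyadicBox n e m)}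

/-- The row of the grid that contains the value of `f` at the grid vertex `b`. -/
noncomputable def graphRow (n : ℕ) (f : (Fin n → ℝ) → ℝ) (e : Fin (n + 1) → ℕ)
    (b : Fin n → ℕ) : ℕ :=
  ⌊f (gridVertex (Fin.init e) b) * 2 ^ e (Fin.last n)⌋₊

lemma mem_crossingBoxes {n : ℕ} {f : (Fin n → ℝ) → ℝ} {e m : Fin (n + 1) → ℕ} :
    m ∈ crossingBoxes n f e ↔ (∀ j, m j < 2 ^ e j) ∧ Crosses n f (dyadicBox n e m) := by
  classical
  simp [crossingBoxes]

section Crossing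

variable {n : ℕ} {f : (Fin n → ℝ) → ℝ} {e : Fin (n + 1) → ℕ}

lemma graphRow_mono (hf : MonotoneOn f (Set.Icc 0 1)) {b b' : Fin n → ℕ} (hbb' : b ≤ b')
    (hb' : ∀ j, b' j ≤ 2 ^ e j.castSucc) : graphRow n f e b ≤ graphRow n f e b' := by
  refine Nat.floor_le_floor (mul_le_mul_of_nonneg_right (hf ?_ (gridVertex_mem_Icc hb')
    (gridVertex_mono _ hbb')) (by positivity))
  exact gridVertex_mem_Icc fun j => (hbb' j).trans (hb' j)

lemma graphRow_lt (hf : ∀ x ∈ Set.Icc 0 1, f x < 1) {b : Fin n → ℕ}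
    (hb : ∀ j, b j ≤ 2 ^ e j.castSucc) : graphRow n f e b < 2 ^ e (Fin.last n) := by
  rw [graphRow, Nat.floor_lt' (by positivity)]
  push_cast
  exact mul_lt_of_lt_one_left (by positivity) (hf _ (gridVertex_mem_Icc hb))

lemma graphRow_le_of_mem_crossingBoxes (hf : MonotoneOn f (Set.Icc 0 1))
    {m : Fin (n + 1) → ℕ} (hm : m ∈ crossingBoxes n f e) :
    graphRow n f e (Fin.init m) ≤ m (Fin.last n) := by
  obtain ⟨hmB, hcross⟩ := mem_crossingBoxes.1 hm
  obtain ⟨p, hp, hfp⟩ := nonempty_of_measure_ne_zero hcross.1.ne'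
  have hbase := init_mem_Icc_gridVertex hp
  have hcorner : f (gridVertex (Fin.init e) (Fin.init m)) ≤ f (Fin.init p) :=
    hf (gridVertex_mem_Icc fun j => (hmB _).le)
      ⟨(gridVertex_mem_Icc fun j => (hmB _).le).1.trans hbase.1,
        hbase.2.trans (gridVertex_mem_Icc fun j => hmB _).2⟩ hbase.1
  have hrow : p (Fin.last n) < (m (Fin.last n) + 1 : ℝ) / 2 ^ e (Fin.last n) := (hp _ trivial).2
  rw [lt_div_iff₀ (by positivity)] at hrow
  rw [← Nat.lt_succ_iff, graphRow, Nat.floor_lt' (Nat.succ_ne_zero _)]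
  push_cast
  exact lt_of_le_of_lt (by gcongr; exact hcorner.trans hfp.le) hrow

lemma le_graphRow_add_one_of_mem_crossingBoxes (hf : MonotoneOn f (Set.Icc 0 1))
    {m : Fin (n + 1) → ℕ} (hm : m ∈ crossingBoxes n f e) :
    m (Fin.last n) ≤ graphRow n f e (Fin.init m + 1) := by
  obtain ⟨hmB, hcross⟩ := mem_crossingBoxes.1 hm
  obtain ⟨p, hp, hfp⟩ := nonempty_of_measure_ne_zero hcross.2.ne'
  have hbase := init_mem_Icc_gridVertex hp
  have hcorner : f (Fin.init p) ≤ f (gridVertex (Fin.init e) (Fin.init m + 1)) :=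
    hf ⟨(gridVertex_mem_Icc fun j => (hmB _).le).1.trans hbase.1,
        hbase.2.trans (gridVertex_mem_Icc fun j => hmB _).2⟩
      (gridVertex_mem_Icc fun j => hmB _) hbase.2
  have hrow : (m (Fin.last n) : ℝ) / 2 ^ e (Fin.last n) ≤ p (Fin.last n) := (hp _ trivial).1
  rw [div_le_iff₀ (by positivity)] at hrow
  refine Nat.le_floor (hrow.trans ?_)
  gcongr
  exact hfp.le.trans hcorner

lemma card_filter_init_crossingBoxes_le (hf : MonotoneOn f (Set.Icc 0 1)) (b : Fin n → ℕ) :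
    #{m ∈ crossingBoxes n f e | Fin.init m = b} ≤
      graphRow n f e (b + 1) + 1 - graphRow n f e b := by
  rw [← Nat.card_Icc]
  refine card_le_card_of_injOn (fun m => m (Fin.last n)) (fun m hm => ?_)
    fun m hm m' hm' hlast => ?_
  · obtain ⟨hmT, rfl⟩ := mem_filter.1 hm
    exact mem_Icc.2 ⟨graphRow_le_of_mem_crossingBoxes hf hmT,
      le_graphRow_add_one_of_mem_crossingBoxes hf hmT⟩
  · rw [← Fin.snoc_init_self m, ← Fin.snoc_init_self m', (mem_filter.1 hm).2,
      (mem_filter.1 hm').2]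
    exact congrArg _ hlast

lemma card_crossingBoxes_add_prod_le (hf : MonotoneOn f (Set.Icc 0 1))
    (hlt : ∀ x ∈ Set.Icc 0 1, f x < 1) :
    #(crossingBoxes n f e) + ∏ j, (2 ^ e j - 1) ≤ 2 ^ ∑ j, e j := by
  set B := Fintype.piFinset fun j : Fin n => range (2 ^ e j.castSucc)
  set A := graphRow n f e
  set M := 2 ^ e (Fin.last n) - 1
  have hB : #B = ∏ j : Fin n, 2 ^ e j.castSucc := by simp [B]
  have hsucc_le : ∀ b ∈ B, ∀ j, (b + 1) j ≤ 2 ^ e j.castSucc := fun b hb j =>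
    Nat.succ_le_of_lt (mem_range.1 (Fintype.mem_piFinset.1 hb j))
  have hfiber : #(crossingBoxes n f e) ≤ ∑ b ∈ B, (A (b + 1) + 1 - A b) := by
    have hinit : ∀ m ∈ crossingBoxes n f e, Fin.init m ∈ B := fun m hm =>
      Fintype.mem_piFinset.2 fun j => mem_range.2 ((mem_crossingBoxes.1 hm).1 j.castSucc)
    rw [card_eq_sum_card_fiberwise hinit]
    exact sum_le_sum fun b _ => card_filter_init_crossingBoxes_le hf b
  have htelescope :
      ∑ b ∈ B, (A (b + 1) + 1 - A b) + ∑ b ∈ B, A b = ∑ b ∈ B, A (b + 1) + #B := by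
    rw [← sum_add_distrib, card_eq_sum_ones, ← sum_add_distrib]
    refine sum_congr rfl fun b hb => ?_
    have : A b ≤ A (b + 1) :=
      graphRow_mono hf (le_add_of_nonneg_right zero_le_one) (hsucc_le b hb)
    omega
  have hshift : ∑ b ∈ B, A (b + 1) ≤ ∑ b ∈ B, A b + #(B.image (· + 1) \ B) * M := by
    refine sum_le_sum_add_card_sdiff_mul (add_left_injective 1).injOn fun c hc => ?_
    obtain ⟨b, hb, rfl⟩ := mem_image.1 (mem_sdiff.1 hc).1
    have : A (b + 1) < 2 ^ e (Fin.last n) := graphRow_lt hlt (hsucc_le b hb)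
    omega
  have hgrid := card_image_add_one_sdiff_piFinset_range_add_prod fun j : Fin n => 2 ^ e j.castSucc
  have hM : 2 ^ e (Fin.last n) = M + 1 := (Nat.succ_pred_eq_of_pos (by positivity)).symm
  rw [← prod_pow_eq_pow_sum, Fin.prod_univ_castSucc, Fin.prod_univ_castSucc, hM,
    Nat.add_sub_cancel]
  nlinarith

lemma volume_biUnion_crossingBoxes_le
    (hf : MonotoneOn f (Set.Icc 0 1)) (hlt : ∀ x ∈ Set.Icc 0 1, f x < 1) :
    volume (⋃ m ∈ crossingBoxes n f e, dyadicBox n e m) ≤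
      ENNReal.ofReal (1 - (∏ j, ((2 : ℝ) ^ e j - 1)) / 2 ^ ∑ j, e j) := by
  have hcount :
      (#(crossingBoxes n f e) : ℝ) + ∏ j, ((2 : ℝ) ^ e j - 1) ≤ 2 ^ ∑ j, e j := by
    have := card_crossingBoxes_add_prod_le (e := e) hf hlt
    rw [← Nat.cast_le (α := ℝ)] at this
    simpa [Nat.cast_prod, Nat.cast_sub, Nat.one_le_two_pow] using this
  rw [volume_biUnion_dyadicBox, ← ENNReal.ofReal_natCast,
    ← ENNReal.ofReal_mul (Nat.cast_nonneg _), one_sub_div (by positivity), div_eq_mul_inv]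
  gcongr
  linarith

end Crossing

theorem stmt_4_general (n : ℕ) (f : (Fin n → ℝ) → ℝ)
    (hmono : ∀ x y : Fin n → ℝ, (∀ j, 0 ≤ x j) → (∀ j, x j ≤ y j) →
      (∀ j, y j ≤ 1) → f x ≤ f y)
    (hmem : ∀ x : Fin n → ℝ, (∀ j, 0 ≤ x j ∧ x j ≤ 1) → 0 ≤ f x ∧ f x < 1)
    (k i : ℕ) (hi : i ≤ n) :
    volume (⋃ m ∈ {m : Fin (n + 1) → ℕ |
        (∀ j, m j < 2 ^ (if (j : ℕ) < i then k + 1 else k)) ∧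
        Crosses n f (dyadicBox n (fun j => if (j : ℕ) < i then k + 1 else k) m)},
      dyadicBox n (fun j => if (j : ℕ) < i then k + 1 else k) m) ≤
      ENNReal.ofReal
        (1 - ((2 : ℝ) ^ (k + 1) - 1) ^ i * ((2 : ℝ) ^ k - 1) ^ (n + 1 - i) /
          2 ^ (k * (n + 1) + i)) := by
  set e : Fin (n + 1) → ℕ := fun j => if (j : ℕ) < i then k + 1 else k
  have hf : MonotoneOn f (Set.Icc 0 1) := fun x hx y hy hxy => hmono x y hx.1 hxy hy.2
  have hlt : ∀ x ∈ Set.Icc 0 1, f x < 1 := fun x hx => (hmem x fun j => ⟨hx.1 j, hx.2 j⟩).2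
  have hboxes : {m | (∀ j, m j < 2 ^ e j) ∧ Crosses n f (dyadicBox n e m)} =
      ↑(crossingBoxes n f e) := Set.ext fun _ => mem_crossingBoxes.symm
  have hprod :
      ∏ j, ((2 : ℝ) ^ e j - 1) = (2 ^ (k + 1) - 1) ^ i * (2 ^ k - 1) ^ (n + 1 - i) := by
    rw [← Fin.prod_univ_ite_val_lt (hi.trans n.le_succ)]
    exact prod_congr rfl fun j _ => by simp only [e]; split_ifs <;> rfl
  have hsum : ∑ j, e j = k * (n + 1) + i := by
    rw [Fin.sum_univ_ite_val_lt (hi.trans n.le_succ), smul_eq_mul, smul_eq_mul]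
    obtain ⟨c, rfl⟩ := Nat.exists_eq_add_of_le hi
    rw [show i + c + 1 - i = c + 1 by omega]
    ring
  rw [hboxes, Finset.set_biUnion_coe, ← hprod, ← hsum]
  exact volume_biUnion_crossingBoxes_le hf hlt

theorem stmt_4 (n : ℕ) (hn : 1 ≤ n) (f : (Fin n → ℝ) → ℝ)
    (hmono : ∀ x y : Fin n → ℝ, (∀ j, 0 ≤ x j) → (∀ j, x j ≤ y j) →
      (∀ j, y j ≤ 1) → f x ≤ f y)
    (hmem : ∀ x : Fin n → ℝ, (∀ j, 0 ≤ x j ∧ x j ≤ 1) → 0 ≤ f x ∧ f x < 1)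
    (k i : ℕ) (hi : i ≤ n) :
    volume (⋃ m ∈ {m : Fin (n + 1) → ℕ |
        (∀ j, m j < 2 ^ (if (j : ℕ) < i then k + 1 else k)) ∧
        Crosses n f (dyadicBox n (fun j => if (j : ℕ) < i then k + 1 else k) m)},
      dyadicBox n (fun j => if (j : ℕ) < i then k + 1 else k) m) ≤
      ENNReal.ofReal
        (1 - ((2 : ℝ) ^ (k + 1) - 1) ^ i * ((2 : ℝ) ^ k - 1) ^ (n + 1 - i) /
          2 ^ (k * (n + 1) + i)) :=
  stmt_4_general n f hmono hmem k i hi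
end

section
/- For every integer n ≥ 1, the double series ∑_{k=0}^∞ ∑_{i=0}^n (1 − (2^{k+1}−1)^i (2^k−1)^{n+1−i} / 2^{k(n+1)+i}) converges and its sum is at most 2(n+1)^2. -/
open Finset

/-!
Dividing by `2 ^ (k * (n + 1) + i)` turns the `i`-th summand into `1 - a ^ i * b ^ (n + 1 - i)`
with `a = 1 - (1/2) ^ (k + 1)` and `b = 1 - (1/2) ^ k`. Since `0 ≤ b ≤ a ≤ 1`, this lies between
`0` and `1 - b ^ (n + 1)`, which Bernoulli's inequality bounds by `(n + 1) (1/2) ^ k`. So the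
`k`-th term of the series is at most `(n + 1) ^ 2 (1/2) ^ k`, and the geometric series gives
the bound.
-/

lemma one_sub_pow_mul_pow_nonneg {R : Type*} [CommRing R] [LinearOrder R] [IsStrictOrderedRing R]
    {a b : R} (ha₀ : 0 ≤ a) (ha₁ : a ≤ 1) (hb₀ : 0 ≤ b) (hb₁ : b ≤ 1) (i j : ℕ) :
    0 ≤ 1 - a ^ i * b ^ j :=
  sub_nonneg.2 <| mul_le_one₀ (pow_le_one₀ ha₀ ha₁) (pow_nonneg hb₀ j) (pow_le_one₀ hb₀ hb₁)

lemma one_sub_pow_mul_pow_sub_le {R : Type*} [CommRing R] [LinearOrder R] [IsStrictOrderedRing R]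
    {a b : R} (hb₀ : 0 ≤ b) (hba : b ≤ a) {i m : ℕ} (hi : i ≤ m) :
    1 - a ^ i * b ^ (m - i) ≤ m * (1 - b) := by
  have hpow : b ^ m ≤ a ^ i * b ^ (m - i) := by
    rw [← Nat.add_sub_cancel' hi, pow_add, Nat.add_sub_cancel_left]
    exact mul_le_mul_of_nonneg_right (pow_le_pow_left₀ hb₀ hba i) (pow_nonneg hb₀ _)
  have hbernoulli : 1 + m * (b - 1) ≤ b ^ m := one_add_mul_sub_le_pow (by linarith) m
  linarith

lemma two_pow_sub_one_div (k : ℕ) : ((2 : ℝ) ^ k - 1) / 2 ^ k = 1 - (1 / 2) ^ k := by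
  rw [sub_div, div_self (by positivity), one_div_pow]

lemma two_pow_succ_sub_one_pow_mul_div {k m i : ℕ} (hi : i ≤ m) :
    ((2 : ℝ) ^ (k + 1) - 1) ^ i * ((2 : ℝ) ^ k - 1) ^ (m - i) / 2 ^ (k * m + i) =
      (1 - (1 / 2) ^ (k + 1)) ^ i * (1 - (1 / 2) ^ k) ^ (m - i) := by
  have hexp : k * m + i = (k + 1) * i + k * (m - i) := by
    obtain ⟨j, rfl⟩ := Nat.exists_eq_add_of_le hi
    rw [Nat.add_sub_cancel_left]
    ring
  rw [hexp, pow_add (2 : ℝ) ((k + 1) * i), pow_mul, pow_mul, mul_div_mul_comm, ← div_pow, ← div_pow,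
    two_pow_sub_one_div, two_pow_sub_one_div]

lemma summable_and_tsum_le_of_le_geometric_two {f : ℕ → ℝ} {C : ℝ} (hf₀ : ∀ k, 0 ≤ f k)
    (hf : ∀ k, f k ≤ C * (1 / 2) ^ k) : Summable f ∧ ∑' k, f k ≤ 2 * C := by
  have hg : Summable fun k : ℕ => C * (1 / 2 : ℝ) ^ k := summable_geometric_two.mul_left C
  have hsum : Summable f := hg.of_nonneg_of_le hf₀ hf
  refine ⟨hsum, ?_⟩
  calc ∑' k, f k ≤ ∑' k : ℕ, C * (1 / 2 : ℝ) ^ k := hsum.tsum_le_tsum hf hg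
    _ = 2 * C := by rw [tsum_mul_left, tsum_geometric_two, mul_comm]

theorem stmt_7_general (n : ℕ) :
    Summable (fun k : ℕ => ∑ i ∈ Finset.range (n + 1),
      (1 - ((2 : ℝ) ^ (k + 1) - 1) ^ i * ((2 : ℝ) ^ k - 1) ^ (n + 1 - i) /
        2 ^ (k * (n + 1) + i))) ∧
    (∑' k : ℕ, ∑ i ∈ Finset.range (n + 1),
      (1 - ((2 : ℝ) ^ (k + 1) - 1) ^ i * ((2 : ℝ) ^ k - 1) ^ (n + 1 - i) /
        2 ^ (k * (n + 1) + i))) ≤ 2 * (n + 1 : ℝ) ^ 2 := by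
  have hhalf : ∀ k : ℕ, 0 ≤ (1 / 2 : ℝ) ^ k ∧ (1 / 2 : ℝ) ^ k ≤ 1 := fun k =>
    ⟨by positivity, pow_le_one₀ (by norm_num) (by norm_num)⟩
  have hmono : ∀ k : ℕ, (1 / 2 : ℝ) ^ (k + 1) ≤ (1 / 2) ^ k := fun k =>
    pow_le_pow_of_le_one (by norm_num) (by norm_num) k.le_succ
  refine summable_and_tsum_le_of_le_geometric_two (fun k => sum_nonneg fun i hi => ?_) fun k => ?_
  · rw [two_pow_succ_sub_one_pow_mul_div (mem_range.1 hi).le]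
    exact one_sub_pow_mul_pow_nonneg (by linarith [hhalf (k + 1)]) (by linarith [hhalf (k + 1)])
      (by linarith [hhalf k]) (by linarith [hhalf k]) _ _
  · calc _ ≤ ∑ _i ∈ range (n + 1), (n + 1 : ℝ) * (1 / 2) ^ k := by
          refine sum_le_sum fun i hi => ?_
          have hi : i ≤ n + 1 := (mem_range.1 hi).le
          rw [two_pow_succ_sub_one_pow_mul_div hi]
          have := one_sub_pow_mul_pow_sub_le (R := ℝ) (a := 1 - (1 / 2) ^ (k + 1))
            (b := 1 - (1 / 2) ^ k) (by linarith [hhalf k]) (by linarith [hmono k]) hi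
          push_cast at this
          linarith
      _ = (n + 1 : ℝ) ^ 2 * (1 / 2) ^ k := by
          rw [sum_const, card_range, nsmul_eq_mul]
          push_cast
          ring

theorem stmt_7 (n : ℕ) (hn : 1 ≤ n) :
    Summable (fun k : ℕ => ∑ i ∈ Finset.range (n + 1),
      (1 - ((2 : ℝ) ^ (k + 1) - 1) ^ i * ((2 : ℝ) ^ k - 1) ^ (n + 1 - i) /
        2 ^ (k * (n + 1) + i))) ∧
    (∑' k : ℕ, ∑ i ∈ Finset.range (n + 1),
      (1 - ((2 : ℝ) ^ (k + 1) - 1) ^ i * ((2 : ℝ) ^ k - 1) ^ (n + 1 - i) /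
        2 ^ (k * (n + 1) + i))) ≤ 2 * (n + 1 : ℝ) ^ 2 :=
  stmt_7_general n
end
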